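/- For the one-level additive Schwarz preconditioner with N subdomains, the largest eigenvalue of M⁻¹A is at most N; more precisely, xᵀ A^{1/2} M⁻¹ A^{1/2} x ≤ N · xᵀ x for all x, i.e., λ_max(M⁻¹A) ≤ N. -/

import Mathlib

open Matrix

def restrMat {n : ℕ} (S : Finset (Fin n)) : Matrix S (Fin n) ℝ :=
  Matrix.of fun r c => if (r : Fin n) = c then 1 else 0

lemma aux_dotProduct_self_nonneg {m : Type*} [Fintype m] (v : m → ℝ) : 0 ≤ v ⬝ᵥ v :=
  Finset.sum_nonneg fun i _ => mul_self_nonneg _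

/-- quadratic form of a symmetric idempotent is bounded by the identity -/
lemma aux_proj_bound {n : ℕ} (P : Matrix (Fin n) (Fin n) ℝ) (hs : Pᵀ = P)
    (hp : P * P = P) (x : Fin n → ℝ) : x ⬝ᵥ P *ᵥ x ≤ x ⬝ᵥ x := by
  have key : 0 ≤ (x - P *ᵥ x) ⬝ᵥ (x - P *ᵥ x) := aux_dotProduct_self_nonneg _
  have h1 : (P *ᵥ x) ⬝ᵥ (P *ᵥ x) = x ⬝ᵥ P *ᵥ x := by
    rw [dotProduct_mulVec, ← mulVec_transpose, hs, mulVec_mulVec, hp, dotProduct_comm]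
  have h2 : (P *ᵥ x) ⬝ᵥ x = x ⬝ᵥ P *ᵥ x := dotProduct_comm _ _
  have hexp : (x - P *ᵥ x) ⬝ᵥ (x - P *ᵥ x) = x ⬝ᵥ x - x ⬝ᵥ P *ᵥ x := by
    rw [sub_dotProduct, dotProduct_sub, dotProduct_sub, h1, h2]; ring
  linarith [hexp ▸ key]

/-- `restrMat S ᵀ *ᵥ v` restricted to an index of `S` gives back `v`. -/
lemma aux_restr_mulVec {n : ℕ} (S : Finset (Fin n)) (v : S → ℝ) (r : S) :
    ((restrMat S)ᵀ *ᵥ v) (r : Fin n) = v r := by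
  simp only [mulVec, dotProduct, transpose_apply, restrMat, of_apply]
  rw [Finset.sum_eq_single r]
  · simp
  · intro b _ hb
    rw [if_neg (fun h => hb (Subtype.coe_injective h)), zero_mul]
  · simp

/-- The largest eigenvalue of the one-level additive Schwarz preconditioned operator
M⁻¹A is at most the number of subdomains N: the quadratic form of
A^{1/2} M⁻¹ A^{1/2} is bounded by N, and any real eigenvalue of M⁻¹A is ≤ N. -/
theorem additive_schwarz_lambda_max_le {n N : ℕ}
    (A : Matrix (Fin n) (Fin n) ℝ) (hA : A.PosDef)
    (S : Fin N → Finset (Fin n)) (hcover : ∀ j : Fin n, ∃ i : Fin N, j ∈ S i)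
    (Minv : Matrix (Fin n) (Fin n) ℝ)
    (hM : Minv = ∑ i : Fin N,
      (restrMat (S i))ᵀ * (restrMat (S i) * A * (restrMat (S i))ᵀ)⁻¹ * restrMat (S i))
    (sqrtA : Matrix (Fin n) (Fin n) ℝ) (hsqrt : sqrtA = hA.posSemidef.1.cfc Real.sqrt) :
    (∀ x : Fin n → ℝ, x ⬝ᵥ (sqrtA * Minv * sqrtA).mulVec x ≤ N * (x ⬝ᵥ x)) ∧
    (∀ (μ : ℝ) (x : Fin n → ℝ), x ≠ 0 → (Minv * A).mulVec x = μ • x → μ ≤ N) := by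
  have hAsymm : Aᵀ = A := by
    rw [← conjTranspose_eq_transpose_of_trivial]; exact hA.isHermitian.eq
  have hSsymm : sqrtAᵀ = sqrtA := by
    rw [← conjTranspose_eq_transpose_of_trivial, hsqrt]
    rw [← hA.posSemidef.1.cfc_eq]
    exact (cfc_predicate Real.sqrt A).star_eq
  have hSS : sqrtA * sqrtA = A := by
    rw [hsqrt, ← hA.posSemidef.1.cfc_eq, ← cfc_mul Real.sqrt Real.sqrt A]
    conv_rhs => rw [← cfc_id ℝ A]
    exact cfc_congr (fun x hx => Real.mul_self_sqrt
      ((posSemidef_iff_isHermitian_and_spectrum_nonneg.mp hA.posSemidef).2 hx))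
  -- local notation
  set R : (i : Fin N) → Matrix (S i) (Fin n) ℝ := fun i => restrMat (S i) with hR
  have hAi : ∀ i, ((R i) * A * (R i)ᵀ).PosDef := by
    intro i
    refine Matrix.PosDef.of_dotProduct_mulVec_pos ?_ ?_
    · have h := isHermitian_mul_mul_conjTranspose (R i) hA.isHermitian
      rwa [conjTranspose_eq_transpose_of_trivial] at h
    · intro v hv
      have hv' : (R i)ᵀ *ᵥ v ≠ 0 := by
        intro h0
        apply hv
        funext r
        have := congrFun h0 (r : Fin n)
        rwa [aux_restr_mulVec] at this
      have := hA.dotProduct_mulVec_pos hv'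
      simpa only [star_trivial, ← mulVec_mulVec, dotProduct_mulVec, mulVec_transpose,
        Matrix.mul_assoc] using this
  have hinv : ∀ i, ((R i) * A * (R i)ᵀ)⁻¹ * ((R i) * A * (R i)ᵀ) = 1 := fun i =>
    nonsing_inv_mul _ ((isUnit_iff_isUnit_det _).mp (hAi i).isUnit)
  have hinvsymm : ∀ i, (((R i) * A * (R i)ᵀ)⁻¹)ᵀ = ((R i) * A * (R i)ᵀ)⁻¹ := by
    intro i
    rw [transpose_nonsing_inv, ← conjTranspose_eq_transpose_of_trivial,
      (hAi i).isHermitian.eq]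
  -- the projections
  set T : (i : Fin N) → Matrix (Fin n) (Fin n) ℝ :=
    fun i => sqrtA * ((R i)ᵀ * ((R i) * A * (R i)ᵀ)⁻¹ * (R i)) * sqrtA with hT
  have hTsymm : ∀ i, (T i)ᵀ = T i := by
    intro i
    simp only [hT, transpose_mul, transpose_transpose, hSsymm, hinvsymm i]
    simp only [Matrix.mul_assoc]
  have hTidem : ∀ i, T i * T i = T i := by
    intro i
    have : ((R i)ᵀ * ((R i) * A * (R i)ᵀ)⁻¹ * (R i)) * A *
        ((R i)ᵀ * ((R i) * A * (R i)ᵀ)⁻¹ * (R i)) =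
        (R i)ᵀ * ((R i) * A * (R i)ᵀ)⁻¹ * (R i) := by
      calc ((R i)ᵀ * ((R i) * A * (R i)ᵀ)⁻¹ * (R i)) * A *
            ((R i)ᵀ * ((R i) * A * (R i)ᵀ)⁻¹ * (R i))
          = (R i)ᵀ * (((R i) * A * (R i)ᵀ)⁻¹ * ((R i) * A * (R i)ᵀ) *
              (((R i) * A * (R i)ᵀ)⁻¹ * (R i))) := by
            simp only [Matrix.mul_assoc]
        _ = (R i)ᵀ * ((R i) * A * (R i)ᵀ)⁻¹ * (R i) := by
            rw [hinv i, Matrix.one_mul]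
            simp only [Matrix.mul_assoc]
    calc T i * T i
        = sqrtA * (((R i)ᵀ * ((R i) * A * (R i)ᵀ)⁻¹ * (R i)) * (sqrtA * sqrtA) *
            ((R i)ᵀ * ((R i) * A * (R i)ᵀ)⁻¹ * (R i))) * sqrtA := by
          simp only [hT, Matrix.mul_assoc]
      _ = T i := by rw [hSS, this]
  have hsum : sqrtA * Minv * sqrtA = ∑ i, T i := by
    rw [hM, Finset.mul_sum, Finset.sum_mul]
  have part1 : ∀ x : Fin n → ℝ, x ⬝ᵥ (sqrtA * Minv * sqrtA).mulVec x ≤ N * (x ⬝ᵥ x) := by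
    intro x
    rw [hsum]
    have h1 : (∑ i, T i) *ᵥ x = ∑ i, (T i) *ᵥ x := by
      funext j
      simp only [mulVec, dotProduct, Matrix.sum_apply, Finset.sum_apply, Finset.sum_mul]
      rw [Finset.sum_comm]
    have h2 : x ⬝ᵥ (∑ i, (T i) *ᵥ x) = ∑ i, x ⬝ᵥ (T i) *ᵥ x := by
      simp only [dotProduct, Finset.sum_apply, Finset.mul_sum]
      rw [Finset.sum_comm]
    rw [h1, h2]
    calc ∑ i, x ⬝ᵥ (T i) *ᵥ x ≤ ∑ _i : Fin N, x ⬝ᵥ x :=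
          Finset.sum_le_sum fun i _ => aux_proj_bound (T i) (hTsymm i) (hTidem i) x
      _ = N * (x ⬝ᵥ x) := by simp [Finset.sum_const, nsmul_eq_mul]
  refine ⟨part1, ?_⟩
  intro μ x hx heig
  have hc : 0 < x ⬝ᵥ A *ᵥ x := by simpa using hA.dotProduct_mulVec_pos hx
  have key := part1 (sqrtA *ᵥ x)
  have lhs_eq : (sqrtA *ᵥ x) ⬝ᵥ (sqrtA * Minv * sqrtA) *ᵥ (sqrtA *ᵥ x) = μ * (x ⬝ᵥ A *ᵥ x) := by
    have h1 : (sqrtA * Minv * sqrtA) *ᵥ (sqrtA *ᵥ x) = sqrtA *ᵥ ((Minv * A) *ᵥ x) := by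
      rw [mulVec_mulVec, mulVec_mulVec, Matrix.mul_assoc, Matrix.mul_assoc, hSS,
        ← Matrix.mul_assoc]
    rw [h1, heig, mulVec_smul, dotProduct_smul, dotProduct_mulVec, ← mulVec_transpose,
      hSsymm, mulVec_mulVec, hSS, dotProduct_comm, smul_eq_mul]
  have rhs_eq : (sqrtA *ᵥ x) ⬝ᵥ (sqrtA *ᵥ x) = x ⬝ᵥ A *ᵥ x := by
    rw [dotProduct_mulVec, ← mulVec_transpose, hSsymm, mulVec_mulVec, hSS, dotProduct_comm]
  rw [lhs_eq, rhs_eq] at key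
  nlinarith [key, hc]
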